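/- arXiv:2502.09887 — 6 statements merged into one kernel-verified Lean document; each statement's English description precedes it below -/
import Mathlib

section
/- Let G be a finite group, H a subgroup of G, and V a finite-dimensional complex representation of G equipped with a G/H-grading, i.e., an internal direct sum decomposition V = ⊕_{x ∈ G/H} V_x into complex subspaces such that g · V_x = V_{gx} for every g ∈ G and every coset x ∈ G/H. If V is nonzero and irreducible as a representation of G (its only G-invariant subspaces are 0 and V), then the component V_{1H} at the identity coset is nonzero, is invariant under the action of H, and is irreducible as a representation of H (its only H-invariant subspaces are 0 and V_{1H}). -/
/-!
Since `G` permutes the components transitively, all of them are translates of `V_{1H}`, which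
is therefore nonzero. If `0 ≠ U ≤ V_{1H}` is `H`-invariant, its `G`-translates span `V` by
irreducibility. A translate `g • U` with `g ∉ H` lies in the component `V_{gH} ≠ V_{1H}`, so
`V = U ⊔ ⨆_{y ≠ 1H} V_y`; intersecting with `V_{1H}`, which is independent of the other
components, the modular law gives `V_{1H} = U`.
-/

namespace Representation

variable {k G X V : Type*}

section Monoid

variable [Monoid G] [MulAction G X] [CommSemiring k] [AddCommMonoid V] [Module k V]
  (ρ : Representation k G V)

theorem map_iSup_map_le (U : Submodule k V) (g : G) :
    (⨆ g' : G, U.map (ρ g')).map (ρ g) ≤ ⨆ g' : G, U.map (ρ g') := by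
  rw [Submodule.map_iSup]
  refine iSup_le fun g' => ?_
  rw [← Submodule.map_comp, ← Module.End.mul_eq_comp, ← map_mul]
  exact le_iSup (fun g' : G => U.map (ρ g')) (g * g')

theorem le_iSup_map (U : Submodule k V) : U ≤ ⨆ g : G, U.map (ρ g) := by
  simpa [Module.End.one_eq_id] using le_iSup (fun g : G => U.map (ρ g)) 1

theorem ne_bot_of_isInternal_of_map_eq [MulAction.IsPretransitive G X] [DecidableEq X]
    [Nontrivial V] {W : X → Submodule k V} (hinternal : DirectSum.IsInternal W)
    (hgrade : ∀ (g : G) (x : X), (W x).map (ρ g) = W (g • x)) (x : X) : W x ≠ ⊥ := by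
  intro hx
  have hall : ∀ y, W y = ⊥ := fun y => by
    obtain ⟨g, rfl⟩ := MulAction.exists_smul_eq G x y
    rw [← hgrade, hx, Submodule.map_bot]
  exact bot_ne_top <| (iSup_eq_bot.mpr hall).symm.trans hinternal.submodule_iSup_eq_top

end Monoid

variable [Group G] [MulAction G X] [CommRing k] [AddCommGroup V] [Module k V]
  (ρ : Representation k G V)

theorem eq_of_iSupIndep_of_iSup_map_eq_top {W : X → Submodule k V} (hindep : iSupIndep W)
    (hgrade : ∀ (g : G) (x : X), (W x).map (ρ g) = W (g • x)) {x : X} {U : Submodule k V}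
    (hUW : U ≤ W x) (hU : ∀ g ∈ MulAction.stabilizer G x, U.map (ρ g) ≤ U)
    (hspan : ⨆ g : G, U.map (ρ g) = ⊤) : U = W x := by
  set C := ⨆ (y : X) (_ : y ≠ x), W y
  have htranslate : ∀ g : G, U.map (ρ g) ≤ U ⊔ C := fun g => by
    by_cases hg : g • x = x
    · exact (hU g hg).trans le_sup_left
    · calc U.map (ρ g) ≤ (W x).map (ρ g) := Submodule.map_mono hUW
        _ = W (g • x) := hgrade g x
        _ ≤ C := le_biSup W hg
        _ ≤ U ⊔ C := le_sup_right
  have hcover : W x ≤ U ⊔ C := le_top.trans (hspan ▸ iSup_le htranslate)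
  calc U = U ⊔ C ⊓ W x := by rw [(hindep x).symm.eq_bot, sup_bot_eq]
    _ = (U ⊔ C) ⊓ W x := (sup_inf_assoc_of_le C hUW).symm
    _ = W x := inf_eq_right.mpr hcover

end Representation

theorem graded_irreducible_component_general
    {G V : Type*} [Group G] [AddCommGroup V] [Module ℂ V]
    (H : Subgroup G) [DecidableEq (G ⧸ H)]
    (ρ : Representation ℂ G V)
    (W : G ⧸ H → Submodule ℂ V)
    (hinternal : DirectSum.IsInternal W)
    (hgrade : ∀ (g : G) (x : G ⧸ H), (W x).map (ρ g) = W (g • x))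
    (hV : Nontrivial V)
    (hirr : ∀ U : Submodule ℂ V, (∀ g : G, U.map (ρ g) ≤ U) → U = ⊥ ∨ U = ⊤) :
    W ((1 : G) : G ⧸ H) ≠ ⊥ ∧
    (∀ h : G, h ∈ H → (W ((1 : G) : G ⧸ H)).map (ρ h) = W ((1 : G) : G ⧸ H)) ∧
    (∀ U : Submodule ℂ V, U ≤ W ((1 : G) : G ⧸ H) →
      (∀ h : G, h ∈ H → U.map (ρ h) ≤ U) → U = ⊥ ∨ U = W ((1 : G) : G ⧸ H)) := by
  have hstab : ∀ h : G, h ∈ H ↔ h ∈ MulAction.stabilizer G ((1 : G) : G ⧸ H) := fun h => by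
    rw [MulAction.stabilizer_quotient]
  refine ⟨ρ.ne_bot_of_isInternal_of_map_eq hinternal hgrade _,
    fun h hh => by rw [hgrade, MulAction.mem_stabilizer_iff.mp ((hstab h).mp hh)],
    fun U hUW hU => ?_⟩
  rcases eq_or_ne U ⊥ with hbot | hne
  · exact Or.inl hbot
  have hspan : ⨆ g : G, U.map (ρ g) = ⊤ :=
    (hirr _ (ρ.map_iSup_map_le U)).resolve_left (ne_bot_of_le_ne_bot hne (ρ.le_iSup_map U))
  exact Or.inr <| ρ.eq_of_iSupIndep_of_iSup_map_eq_top hinternal.submodule_iSupIndep hgrade hUW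
    (fun g hg => hU g ((hstab g).mpr hg)) hspan

/-- Let `G` be a finite group, `H ≤ G`, and `V` a nonzero finite-dimensional complex
representation of `G` with a `G/H`-grading `W : G ⧸ H → Submodule ℂ V` satisfying
`g • W x = W (g • x)`.  If `V` is irreducible as a `G`-representation, then the component
at the identity coset is nonzero, is `H`-invariant, and is irreducible as an
`H`-representation. -/
theorem graded_irreducible_component
    {G V : Type*} [Group G] [Finite G] [AddCommGroup V] [Module ℂ V]
    [FiniteDimensional ℂ V] (H : Subgroup G) [DecidableEq (G ⧸ H)]
    (ρ : Representation ℂ G V)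
    (W : G ⧸ H → Submodule ℂ V)
    (hinternal : DirectSum.IsInternal W)
    (hgrade : ∀ (g : G) (x : G ⧸ H), (W x).map (ρ g) = W (g • x))
    (hV : Nontrivial V)
    (hirr : ∀ U : Submodule ℂ V, (∀ g : G, U.map (ρ g) ≤ U) → U = ⊥ ∨ U = ⊤) :
    W ((1 : G) : G ⧸ H) ≠ ⊥ ∧
    (∀ h : G, h ∈ H → (W ((1 : G) : G ⧸ H)).map (ρ h) = W ((1 : G) : G ⧸ H)) ∧
    (∀ U : Submodule ℂ V, U ≤ W ((1 : G) : G ⧸ H) →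
      (∀ h : G, h ∈ H → U.map (ρ h) ≤ U) → U = ⊥ ∨ U = W ((1 : G) : G ⧸ H)) :=
  graded_irreducible_component_general H ρ W hinternal hgrade hV hirr
end

section
/- Let G be a finite group and A an abelian group. The set of pairs (H, φ), where H ranges over all subgroups of G and φ over all group homomorphisms H → A (formally, the sigma type Σ (H : Subgroup G), (H →* A)), is finite if and only if the set {a ∈ A : a^{exp(G)} = 1} is finite, where exp(G) denotes the exponent of G. -/
/-- A homomorphism `Multiplicative (ZMod n) →* A` sending the generator `1` to `a`,
given `a ^ n = 1`. -/
noncomputable def torHomAux {A : Type*} [CommGroup A] (n : ℕ) (a : A) (h : a ^ n = 1) :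
    Multiplicative (ZMod n) →* A :=
  AddMonoidHom.toMultiplicativeLeft <| ZMod.lift n
    ⟨zmultiplesHom (Additive A) (Additive.ofMul a), by
      rw [zmultiplesHom_apply, ← ofMul_zpow, zpow_natCast, h, ofMul_one]⟩

lemma torHomAux_apply_one {A : Type*} [CommGroup A] (n : ℕ) (a : A) (h : a ^ n = 1) :
    torHomAux n a h (Multiplicative.ofAdd ((1 : ℤ) : ZMod n)) = a := by
  simp only [torHomAux, AddMonoidHom.coe_toMultiplicativeLeft, Function.comp_apply,
    toAdd_ofAdd, ZMod.lift_coe, zmultiplesHom_apply, one_zsmul, toMul_ofMul]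

instance zpowers_isCyclic {G : Type*} [Group G] (g : G) :
    IsCyclic ↥(Subgroup.zpowers g) := by
  refine ⟨⟨⟨g, Subgroup.mem_zpowers g⟩, ?_⟩⟩
  rintro ⟨x, hx⟩
  obtain ⟨k, rfl⟩ := hx
  exact ⟨k, by ext; simp⟩

/-- If there are finitely many homomorphisms from a cyclic group `C` to `A`, then the
`Nat.card C`-torsion of `A` is finite. -/
lemma tor_finite_of_homFinite {A : Type*} [CommGroup A] (C : Type*) [Group C] [IsCyclic C]
    [Finite (C →* A)] : {a : A | a ^ Nat.card C = 1}.Finite := by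
  set n := Nat.card C with hn
  let e : Multiplicative (ZMod n) ≃* C := zmodCyclicMulEquiv ‹IsCyclic C›
  have : Finite {a : A | a ^ n = 1} := by
    refine Finite.of_injective
      (fun a : {a : A | a ^ n = 1} =>
        (torHomAux n a.1 a.2).comp e.symm.toMonoidHom) ?_
    intro a b hab
    have := congrArg (fun f : C →* A => f (e (Multiplicative.ofAdd ((1 : ℤ) : ZMod n)))) hab
    simp only [MonoidHom.comp_apply, MulEquiv.coe_toMonoidHom, MulEquiv.symm_apply_apply,
      torHomAux_apply_one] at this
    exact Subtype.ext this
  exact Set.finite_coe_iff.mp this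

/-- For a finite group `G` and an abelian group `A`, the collection of pairs `(H, φ)` with
`H ≤ G` and `φ : H →* A` is finite iff `{a : A | a ^ exp G = 1}` is finite. -/
theorem finite_pairs_iff_torsion_finite
    {G A : Type*} [Group G] [Finite G] [CommGroup A] :
    Finite ((H : Subgroup G) × (↥H →* A)) ↔
      {a : A | a ^ Monoid.exponent G = 1}.Finite := by
  constructor
  · intro hfin
    have key : ∀ g : G, {a : A | a ^ orderOf g = 1}.Finite := by
      intro g
      haveI : Finite (↥(Subgroup.zpowers g) →* A) :=
        Finite.of_injective
          (fun φ => (⟨Subgroup.zpowers g, φ⟩ : (H : Subgroup G) × (↥H →* A)))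
          (@sigma_mk_injective (Subgroup G) (fun H => ↥H →* A) (Subgroup.zpowers g))
      have := tor_finite_of_homFinite (A := A) (↥(Subgroup.zpowers g))
      rwa [Nat.card_zpowers] at this
    have hL : Monoid.exponent G ≠ 0 := Monoid.exponent_ne_zero_of_finite
    suffices h : ∀ n : ℕ, n ∣ Monoid.exponent G → {a : A | a ^ n = 1}.Finite from
      h _ dvd_rfl
    intro n
    induction n using Nat.recOnPosPrimePosCoprime with
    | prime_pow p k hp hk =>
      intro hdvd
      have pp : p.Prime := hp
      obtain ⟨g, hg⟩ := pp.exists_orderOf_eq_pow_factorization_exponent G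
      have hle : k ≤ (Monoid.exponent G).factorization p :=
        (Nat.Prime.pow_dvd_iff_le_factorization pp hL).mp hdvd
      have hdvd' : p ^ k ∣ orderOf g := hg ▸ pow_dvd_pow p hle
      obtain ⟨m, hm⟩ := hdvd'
      refine (key g).subset ?_
      intro a ha
      simp only [Set.mem_setOf_eq] at ha ⊢
      rw [hm, pow_mul, ha, one_pow]
    | zero =>
      intro hdvd
      exact absurd (zero_dvd_iff.mp hdvd) hL
    | one =>
      intro _
      refine (Set.finite_singleton (1 : A)).subset ?_
      intro a ha
      simpa using ha
    | coprime m k hm hk hcop ihm ihk =>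
      intro hdvd
      have h1 := ihm ((dvd_mul_right m k).trans hdvd)
      have h2 := ihk ((dvd_mul_left k m).trans hdvd)
      refine (h1.mul h2).subset ?_
      intro a ha
      simp only [Set.mem_setOf_eq] at ha
      have hord : ((orderOf a : ℤ)) ∣ ((m * k : ℕ) : ℤ) :=
        Int.natCast_dvd_natCast.mpr (orderOf_dvd_of_pow_eq_one ha)
      have hb : (1 : ℤ) = m * Nat.gcdA m k + k * Nat.gcdB m k := by
        have := Nat.gcd_eq_gcd_ab m k
        rwa [Nat.Coprime.gcd_eq_one hcop, Nat.cast_one] at this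
      refine ⟨(a ^ (k : ℤ)) ^ Nat.gcdB m k, ?_, (a ^ (m : ℤ)) ^ Nat.gcdA m k, ?_, ?_⟩
      · show (((a ^ (k : ℤ)) ^ Nat.gcdB m k) ^ m = 1)
        rw [← zpow_natCast (((a ^ (k : ℤ)) ^ Nat.gcdB m k)), ← zpow_mul, ← zpow_mul]
        refine (orderOf_dvd_iff_zpow_eq_one).mp ?_
        refine hord.trans ⟨Nat.gcdB m k, by push_cast; ring⟩
      · show (((a ^ (m : ℤ)) ^ Nat.gcdA m k) ^ k = 1)
        rw [← zpow_natCast (((a ^ (m : ℤ)) ^ Nat.gcdA m k)), ← zpow_mul, ← zpow_mul]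
        refine (orderOf_dvd_iff_zpow_eq_one).mp ?_
        refine hord.trans ⟨Nat.gcdA m k, by push_cast; ring⟩
      · show (a ^ (k : ℤ)) ^ Nat.gcdB m k * (a ^ (m : ℤ)) ^ Nat.gcdA m k = a
        rw [← zpow_mul, ← zpow_mul, ← zpow_add]
        rw [show (k : ℤ) * Nat.gcdB m k + (m : ℤ) * Nat.gcdA m k = 1 by
          rw [add_comm]; exact hb.symm]
        exact zpow_one a
  · intro hT
    haveI : Finite {a : A | a ^ Monoid.exponent G = 1} := hT.to_subtype
    haveI : ∀ H : Subgroup G, Finite (↥H →* A) := by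
      intro H
      refine Finite.of_injective
        (fun φ : ↥H →* A =>
          (fun h : ↥H => (⟨φ h, ?_⟩ : {a : A | a ^ Monoid.exponent G = 1}))) ?_
      · show φ h ^ Monoid.exponent G = 1
        rw [← map_pow]
        have : h ^ Monoid.exponent G = 1 := by
          ext
          push_cast
          exact Monoid.pow_exponent_eq_one _
        rw [this, map_one]
      · intro φ ψ hφψ
        ext h
        exact congrArg Subtype.val (congrFun hφψ h)
    exact inferInstance
end

section
/- Let G be a finite group and A an abelian group. Let (H, φ) and (K, ψ) be pairs consisting of subgroups H, K ≤ G with homomorphisms φ : H → A and ψ : K → A. Suppose there exists x ∈ G such that H ≤ xKx⁻¹ and φ(h) = ψ(x⁻¹hx) for all h ∈ H, and there exists y ∈ G such that K ≤ yHy⁻¹ and ψ(k) = φ(y⁻¹ky) for all k ∈ K. Then the two pairs are G-conjugate: there exists g ∈ G such that gHg⁻¹ = K and ψ(ghg⁻¹) = φ(h) for all h ∈ H. -/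
/-! Conjugation preserves the order of a subgroup, so `H ≤ xKx⁻¹` and `K ≤ yHy⁻¹` force
`|H| = |K|` and hence `H = xKx⁻¹`; the element `x` then already matches `φ` with `ψ`. -/

open scoped Pointwise

namespace Subgroup

variable {G : Type*} [Group G]

theorem smul_eq_of_smul_le_of_smul_le {α : Type*} [Group α] [MulDistribMulAction α G]
    {H K : Subgroup G} [Finite H] [Finite K] {a b : α} (hH : a • H ≤ K) (hK : b • K ≤ H) :
    a • H = K := by
  have card_le : Nat.card K ≤ Nat.card (a • H : Subgroup G) := calc
    Nat.card K = Nat.card (b • K : Subgroup G) := Nat.card_congr (equivSMul b K).toEquiv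
    _ ≤ Nat.card H := card_le_of_le hK
    _ = Nat.card (a • H : Subgroup G) := Nat.card_congr (equivSMul a H).toEquiv
  exact eq_of_le_of_card_ge hH card_le

theorem conjAct_smul_le_iff {H K : Subgroup G} {g : G} :
    ConjAct.toConjAct g • H ≤ K ↔ ∀ h ∈ H, g * h * g⁻¹ ∈ K := by
  rw [← SetLike.coe_subset_coe, coe_pointwise_smul, Set.smul_set_subset_iff]
  simp only [SetLike.mem_coe, ConjAct.toConjAct_smul]

end Subgroup

/-- If the pair `(H, φ)` is subconjugate to `(K, ψ)` and vice versa, then the two pairs are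
`G`-conjugate. -/
theorem pairs_subconjugate_antisymm
    {G A : Type*} [Group G] [Finite G] [CommGroup A]
    (H K : Subgroup G) (φ : ↥H →* A) (ψ : ↥K →* A)
    (h1 : ∃ x : G, ∀ h : G, (hh : h ∈ H) →
      ∃ hk : x⁻¹ * h * x ∈ K, φ ⟨h, hh⟩ = ψ ⟨x⁻¹ * h * x, hk⟩)
    (h2 : ∃ y : G, ∀ k : G, (hk : k ∈ K) →
      ∃ hh : y⁻¹ * k * y ∈ H, ψ ⟨k, hk⟩ = φ ⟨y⁻¹ * k * y, hh⟩) :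
    ∃ g : G, (∀ h : G, h ∈ H ↔ g * h * g⁻¹ ∈ K) ∧
      ∀ h : G, (hh : h ∈ H) → ∃ hk : g * h * g⁻¹ ∈ K,
        ψ ⟨g * h * g⁻¹, hk⟩ = φ ⟨h, hh⟩ := by
  obtain ⟨x, hx⟩ := h1
  obtain ⟨y, hy⟩ := h2
  have hxH : ConjAct.toConjAct x⁻¹ • H ≤ K :=
    Subgroup.conjAct_smul_le_iff.mpr fun h hh ↦ by simpa only [inv_inv] using (hx h hh).1
  have hyK : ConjAct.toConjAct y⁻¹ • K ≤ H :=
    Subgroup.conjAct_smul_le_iff.mpr fun k hk ↦ by simpa only [inv_inv] using (hy k hk).1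
  have hHK : ConjAct.toConjAct x⁻¹ • H = K := Subgroup.smul_eq_of_smul_le_of_smul_le hxH hyK
  refine ⟨x⁻¹, fun h ↦ ?_, fun h hh ↦ ?_⟩
  · rw [← hHK, ← ConjAct.toConjAct_smul, Subgroup.smul_mem_pointwise_smul_iff]
  · obtain ⟨hk, hφψ⟩ := hx h hh
    simp only [inv_inv]
    exact ⟨hk, hφψ.symm⟩
end

section
/- Let G be a finite group of order n, let V be a finite-dimensional complex representation of G with character χ, and let ω ∈ ℂ be a primitive n-th root of unity. Let R = ℤ[ω] be the subring of ℂ generated over ℤ by ω (the image of Algebra.adjoin ℤ {ω}). Let b, y ∈ G be commuting elements with ord(y) = p^k for a prime p and k ≥ 0, and let 𝔪 be a maximal ideal of R containing p. Then χ(b) − χ(by) lies in 𝔪, i.e., there exists d ∈ 𝔪 whose image in ℂ equals χ(b) − χ(by). -/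
open Module LinearMap

private lemma aux_pow_mem {K V : Type*} [Field K] [AddCommGroup V] [Module K V]
    (f : Module.End K V) (μ : K) {x : V} (hx : x ∈ f.eigenspace μ) (j : ℕ) :
    (f ^ j) x = μ ^ j • x := by
  induction j with
  | zero => simp
  | succ j ih =>
      rw [pow_succ', pow_succ']
      simp only [Module.End.mul_apply]
      rw [ih, map_smul, Module.End.mem_eigenspace_iff.mp hx, smul_smul, mul_comm]

private lemma trace_pow_eq {K V : Type*} [Field K] [IsAlgClosed K] [CharZero K]
    [AddCommGroup V] [Module K V] [FiniteDimensional K V]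
    (f : Module.End K V) (n : ℕ) (hn : n ≠ 0) (hf : f ^ n = 1) :
    ∃ s : Finset K, (∀ μ ∈ s, μ ^ n = 1) ∧ ∀ j : ℕ,
      LinearMap.trace K V (f ^ j) =
        ∑ μ ∈ s, (Module.finrank K (f.eigenspace μ) : K) * μ ^ j := by
  classical
  have hroot : ∀ μ : K, f.eigenspace μ ≠ ⊥ → μ ^ n = 1 := by
    intro μ hμ
    obtain ⟨x, hx, hx0⟩ := Submodule.exists_mem_ne_zero_of_ne_bot hμ
    have h1 : (f ^ n) x = μ ^ n • x := aux_pow_mem f μ hx n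
    rw [hf] at h1
    have h2 : (μ ^ n - 1) • x = 0 := by
      rw [sub_smul, one_smul, ← h1, Module.End.one_apply, sub_self]
    rcases smul_eq_zero.mp h2 with h | h
    · exact sub_eq_zero.mp h
    · exact absurd h hx0
  have hsep : (Polynomial.X ^ n - Polynomial.C (1 : K)).Separable :=
    Polynomial.separable_X_pow_sub_C 1 (by exact_mod_cast hn) one_ne_zero
  have hss : f.IsSemisimple := by
    apply Module.End.isSemisimple_of_squarefree_aeval_eq_zero hsep.squarefree
    rw [map_sub, Polynomial.aeval_X_pow, Polynomial.aeval_C, hf]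
    simp
  have htop : ⨆ μ, f.eigenspace μ = ⊤ := by
    have h := f.iSup_maxGenEigenspace_eq_top
    have h2 := hss.isFinitelySemisimple
    simp_rw [h2.maxGenEigenspace_eq_eigenspace] at h
    exact h
  have hint : DirectSum.IsInternal f.eigenspace :=
    DirectSum.isInternal_submodule_of_iSupIndep_of_iSup_eq_top f.eigenspaces_iSupIndep htop
  have hfin : {μ | f.eigenspace μ ≠ ⊥}.Finite := by
    apply Set.Finite.subset (Polynomial.nthRoots n (1 : K)).toFinset.finite_toSet
    intro μ hμ
    simp only [Multiset.mem_toFinset, Finset.mem_coe]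
    exact (Polynomial.mem_nthRoots (Nat.pos_of_ne_zero hn)).mpr (hroot μ hμ)
  refine ⟨hfin.toFinset, fun μ hμ => hroot μ (by simpa using hμ), fun j => ?_⟩
  have hmaps : ∀ μ : K, Set.MapsTo (f ^ j) (f.eigenspace μ) (f.eigenspace μ) := by
    intro μ x hx
    have : (f ^ j) x = μ ^ j • x := aux_pow_mem f μ hx j
    simp only [Set.mem_setOf_eq, SetLike.mem_coe] at *
    rw [this]
    exact Submodule.smul_mem _ _ hx
  rw [LinearMap.trace_eq_sum_trace_restrict' hint hfin (fun μ => hmaps μ)]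
  refine Finset.sum_congr rfl fun μ hμ => ?_
  have hres : (f ^ j).restrict (hmaps μ) = (μ ^ j) • (1 : Module.End K (f.eigenspace μ)) := by
    ext x
    have := aux_pow_mem f μ x.2 j
    simp [LinearMap.restrict_apply, this]
    exact this
  rw [hres, map_smul, LinearMap.trace_one, smul_eq_mul, mul_comm]

set_option maxHeartbeats 1000000 in
set_option synthInstance.maxHeartbeats 400000 in
private lemma character_diff_aux
    {G V : Type*} [Group G] [Fintype G] [AddCommGroup V] [Module ℂ V]
    [FiniteDimensional ℂ V] (ρ : Representation ℂ G V)
    {R : Type*} [CommRing R] (φ : R →+* ℂ) (hφ : Function.Injective φ)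
    (hsur : ∀ μ : ℂ, μ ^ Fintype.card G = 1 → ∃ x : R, φ x = μ)
    (p : ℕ) (hp : p.Prime) (k : ℕ)
    (b y : G) (hby : b * y = y * b) (hy : orderOf y = p ^ k)
    (𝔪 : Ideal R) (hmax : 𝔪.IsMaximal)
    (hpm : (p : R) ∈ 𝔪) :
    ∃ d ∈ 𝔪, φ d =
      LinearMap.trace ℂ V (ρ b) - LinearMap.trace ℂ V (ρ (b * y)) := by
  classical
  have hn : Fintype.card G ≠ 0 := Fintype.card_ne_zero
  have key : ∀ g : G, ∃ (ι : Type) (_ : Fintype ι) (c : ι → ℕ)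
      (e : ι → R), ∀ j : ℕ,
      LinearMap.trace ℂ V (ρ (g ^ j)) = ∑ i, (c i : ℂ) * (φ (e i)) ^ j := by
    intro g
    have hfn : (ρ g) ^ Fintype.card G = 1 := by
      rw [← map_pow, pow_card_eq_one, map_one]
    obtain ⟨s, hs1, hs2⟩ := trace_pow_eq (ρ g) (Fintype.card G) hn hfn
    have hmem : ∀ μ : {μ // μ ∈ s}, ∃ x : R, φ x = μ.1 :=
      fun μ => hsur μ.1 (hs1 μ.1 μ.2)
    choose e he using hmem
    refine ⟨{μ // μ ∈ s}, inferInstance,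
      fun μ => Module.finrank ℂ (Module.End.eigenspace (ρ g) μ.1), e, fun j => ?_⟩
    rw [map_pow, hs2 j,
      ← Finset.sum_coe_sort s
        (fun μ => (Module.finrank ℂ (Module.End.eigenspace (ρ g) μ) : ℂ) * μ ^ j)]
    exact Finset.sum_congr rfl fun i _ => by rw [he i]
  obtain ⟨ι₁, _, c₁, e₁, h₁⟩ := key b
  obtain ⟨ι₂, _, c₂, e₂, h₂⟩ := key (b * y)
  have hMne : p ^ k ≠ 0 := pow_ne_zero k hp.pos.ne'
  have hcoe : ∀ {ι : Type} [Fintype ι] (c : ι → ℕ) (e : ι → R) (j : ℕ),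
      φ (∑ i, (c i : R) * e i ^ j) = ∑ i, (c i : ℂ) * (φ (e i)) ^ j := by
    intro ι _ c e j
    rw [map_sum]
    exact Finset.sum_congr rfl fun i _ => by rw [map_mul, map_pow, map_natCast]
  have hbyM : (b * y) ^ (p ^ k) = b ^ (p ^ k) := by
    rw [(show Commute b y from hby).mul_pow, ← hy, pow_orderOf_eq_one, mul_one]
  have hMeq : (∑ i, (c₁ i : R) * e₁ i ^ (p ^ k))
      = (∑ i, (c₂ i : R) * e₂ i ^ (p ^ k)) := by
    apply hφ
    rw [hcoe, hcoe, ← h₁ (p ^ k), ← h₂ (p ^ k), hbyM]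
  haveI := hmax
  haveI : CharP (R ⧸ 𝔪) p := (CharP.charP_iff_prime_eq_zero hp).mpr (by
    have h0 : Ideal.Quotient.mk 𝔪 (p : R) = 0 :=
      Ideal.Quotient.eq_zero_iff_mem.mpr hpm
    simpa using h0)
  haveI : Fact p.Prime := ⟨hp⟩
  have natfix : ∀ c : ℕ, ((c : R ⧸ 𝔪)) ^ (p ^ k) = (c : R ⧸ 𝔪) := fun c => by
    have h := map_natCast (_root_.iterateFrobenius (R ⧸ 𝔪) p k) c
    rwa [_root_.iterateFrobenius_def] at h
  have frob : ∀ {ι : Type} [Fintype ι] (c : ι → ℕ) (e : ι → R),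
      Ideal.Quotient.mk 𝔪 (∑ i, (c i : R) * e i) ^ (p ^ k)
        = Ideal.Quotient.mk 𝔪 (∑ i, (c i : R) * e i ^ (p ^ k)) := by
    intro ι _ c e
    rw [map_sum, sum_pow_char_pow, map_sum]
    refine Finset.sum_congr rfl fun i _ => ?_
    rw [map_mul, mul_pow, map_mul, map_natCast, natfix, map_pow]
  have hzero : (Ideal.Quotient.mk 𝔪 (∑ i, (c₁ i : R) * e₁ i)
      - Ideal.Quotient.mk 𝔪 (∑ i, (c₂ i : R) * e₂ i)) ^ (p ^ k) = 0 := by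
    rw [sub_pow_char_pow, frob c₁ e₁, frob c₂ e₂, hMeq, sub_self]
  haveI : IsDomain (R ⧸ 𝔪) := Ideal.Quotient.isDomain 𝔪
  have hz := pow_eq_zero_iff hMne |>.mp hzero
  refine ⟨(∑ i, (c₁ i : R) * e₁ i) - (∑ i, (c₂ i : R) * e₂ i), ?_, ?_⟩
  · rwa [← map_sub, Ideal.Quotient.eq_zero_iff_mem] at hz
  · rw [map_sub]
    have g1 := hcoe c₁ e₁ 1
    have g2 := hcoe c₂ e₂ 1
    simp only [pow_one] at g1 g2
    have t1 := h₁ 1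
    have t2 := h₂ 1
    simp only [pow_one] at t1 t2
    rw [g1, g2, ← t1, ← t2]

/-- Let `G` be a finite group of order `n`, `ρ` a finite-dimensional complex representation with
character `χ`, `ω` a primitive `n`-th root of unity, and `R = ℤ[ω] ⊆ ℂ`.  If `b, y ∈ G` commute,
`ord y = p ^ k` for a prime `p`, and `𝔪` is a maximal ideal of `R` containing `p`, then
`χ(b) − χ(b y)` lies in `𝔪`. -/
theorem character_difference_mem_maximal_ideal
    {G V : Type*} [Group G] [Fintype G] [AddCommGroup V] [Module ℂ V]
    [FiniteDimensional ℂ V] (ρ : Representation ℂ G V)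
    (ω : ℂ) (hω : IsPrimitiveRoot ω (Fintype.card G))
    (p : ℕ) (hp : p.Prime) (k : ℕ)
    (b y : G) (hby : b * y = y * b) (hy : orderOf y = p ^ k)
    (𝔪 : Ideal (Algebra.adjoin ℤ {ω})) (hmax : 𝔪.IsMaximal)
    (hpm : (p : Algebra.adjoin ℤ {ω}) ∈ 𝔪) :
    ∃ d ∈ 𝔪, (d : ℂ) =
      LinearMap.trace ℂ V (ρ b) - LinearMap.trace ℂ V (ρ (b * y)) := by
  haveI : NeZero (Fintype.card G) := ⟨Fintype.card_ne_zero⟩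
  refine character_diff_aux ρ
    ((Algebra.adjoin ℤ {ω}).val.toRingHom) Subtype.coe_injective
    (fun μ hμ => ?_) p hp k b y hby hy 𝔪 hmax hpm
  obtain ⟨i, _, hi⟩ := hω.eq_pow_of_pow_eq_one hμ
  exact ⟨⟨μ, hi ▸ pow_mem (Algebra.self_mem_adjoin_singleton ℤ ω) i⟩, rfl⟩
end

section
/- Let G be a finite group. The order of G is even if and only if there exists an element b ∈ G with b ≠ 1 such that b is conjugate in G to b⁻¹, i.e., there exists g ∈ G with g b g⁻¹ = b⁻¹. -/
/-!
If `|G|` is even, Cauchy's theorem gives an involution, which is conjugate (by `1`) to its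
inverse. Conversely, if `g b g⁻¹ = b⁻¹` then `g²` centralizes `b`; when `|G|` is odd, `g` is a
power of `g²`, so `g` centralizes `b` and `b = b⁻¹`, and squaring is injective on a group of odd
order, so `b = 1`.
-/

theorem Commute.of_pow_left_of_coprime {M : Type*} [Monoid M] {a b : M} {n : ℕ}
    (h : Commute (a ^ n) b) (hn : n.Coprime (orderOf a)) : Commute a b := by
  obtain ⟨m, hm⟩ := exists_pow_eq_self_of_coprime hn
  exact hm ▸ h.pow_left m

section Group

variable {G : Type*} [Group G]

theorem commute_sq_of_conj_eq_inv {g b : G} (h : g * b * g⁻¹ = b⁻¹) : Commute (g ^ 2) b := by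
  have h' : g * b⁻¹ * g⁻¹ = b := by
    rw [← inv_inj, mul_inv_rev, mul_inv_rev, inv_inv, inv_inv, ← mul_assoc, h]
  rw [commute_iff_eq, ← mul_inv_eq_iff_eq_mul]
  calc g ^ 2 * b * (g ^ 2)⁻¹ = g * (g * b * g⁻¹) * g⁻¹ := by
        simp only [sq, mul_inv_rev, mul_assoc]
    _ = b := by rw [h, h']

theorem eq_one_of_inv_eq_self_of_odd_card (hG : Odd (Nat.card G)) {b : G} (hb : b⁻¹ = b) :
    b = 1 := by
  refine (Nat.Coprime.pow_left_bijective (n := 2) hG.coprime_two_right).injective ?_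
  rw [one_pow, sq]
  exact mul_eq_one_iff_eq_inv.mpr hb.symm

theorem eq_one_of_conj_eq_inv_of_odd_card (hG : Odd (Nat.card G)) {g b : G}
    (h : g * b * g⁻¹ = b⁻¹) : b = 1 := by
  have hg : Odd (orderOf g) := hG.of_dvd_nat (orderOf_dvd_natCard g)
  have hgb : Commute g b := (commute_sq_of_conj_eq_inv h).of_pow_left_of_coprime hg.coprime_two_left
  refine eq_one_of_inv_eq_self_of_odd_card hG ?_
  rw [← h, hgb.eq, mul_inv_cancel_right]

theorem exists_ne_one_conj_eq_inv_of_even_card [Finite G] (hG : Even (Nat.card G)) :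
    ∃ b : G, b ≠ 1 ∧ ∃ g : G, g * b * g⁻¹ = b⁻¹ := by
  obtain ⟨b, hb⟩ := exists_prime_orderOf_dvd_card' 2 (even_iff_two_dvd.mp hG)
  refine ⟨b, fun hb1 ↦ by simp [hb1] at hb, 1, ?_⟩
  rw [inv_eq_self_of_orderOf_eq_two hb, one_mul, inv_one, mul_one]

end Group

/-- A finite group has even order iff some nontrivial element is conjugate to its inverse. -/
theorem card_even_iff_exists_conj_inv
    {G : Type*} [Group G] [Fintype G] :
    Even (Fintype.card G) ↔
      ∃ b : G, b ≠ 1 ∧ ∃ g : G, g * b * g⁻¹ = b⁻¹ := by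
  rw [← Nat.card_eq_fintype_card]
  refine ⟨exists_ne_one_conj_eq_inv_of_even_card, ?_⟩
  rintro ⟨b, hb, g, hg⟩
  by_contra hodd
  exact hb (eq_one_of_conj_eq_inv_of_odd_card (Nat.not_even_iff_odd.mp hodd) hg)
end

section
/- Let G be a finite group. The order of G is even if and only if there exists an element g ∈ G with g ≠ 1 such that for every finite-dimensional complex representation V of G, the character value χ_V(g) is a real number (equivalently, equals its complex conjugate). -/
open Finset LinearMap

section OddAux

variable {G : Type*} [Group G]

lemma aux_eq_one_of_conj_inv [Fintype G] (hodd : ¬ Even (Fintype.card G))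
    {g c : G} (hc : c * g * c⁻¹ = g⁻¹) : g = 1 := by
  have hstep : c ^ 2 * g * (c ^ 2)⁻¹ = g := by
    calc c ^ 2 * g * (c ^ 2)⁻¹ = c * (c * g * c⁻¹) * c⁻¹ := by rw [pow_two]; group
      _ = c * g⁻¹ * c⁻¹ := by rw [hc]
      _ = (c * g * c⁻¹)⁻¹ := by group
      _ = g := by rw [hc, inv_inv]
  have h2 : ∀ k : ℕ, (c ^ 2) ^ k * g * ((c ^ 2) ^ k)⁻¹ = g := by
    intro k
    induction k with
    | zero => simp
    | succ k ih =>
      calc (c ^ 2) ^ (k + 1) * g * ((c ^ 2) ^ (k + 1))⁻¹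
          = c ^ 2 * ((c ^ 2) ^ k * g * ((c ^ 2) ^ k)⁻¹) * (c ^ 2)⁻¹ := by
            rw [pow_succ']; group
        _ = g := by rw [ih, hstep]
  have hoddc : Odd (orderOf c) := by
    rw [← Nat.not_even_iff_odd]
    intro he
    exact hodd (even_iff_two_dvd.mpr ((even_iff_two_dvd.mp he).trans orderOf_dvd_card))
  obtain ⟨m, hm⟩ := hoddc
  have hcc : c * g * c⁻¹ = g := by
    have h3 := h2 (m + 1)
    have hcpow : (c ^ 2) ^ (m + 1) = c := by
      rw [← pow_mul]
      have : 2 * (m + 1) = orderOf c + 1 := by omega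
      rw [this, pow_succ, pow_orderOf_eq_one, one_mul]
    rwa [hcpow] at h3
  have hginv : g⁻¹ = g := by rw [← hc, hcc]
  have hg2 : g ^ 2 = 1 := by rw [pow_two]; nth_rewrite 1 [← hginv]; rw [inv_mul_cancel]
  have hdvd : orderOf g ∣ 2 := orderOf_dvd_of_pow_eq_one hg2
  have hoddg : ¬ (2 ∣ orderOf g) := by
    intro h
    exact hodd (even_iff_two_dvd.mpr (h.trans orderOf_dvd_card))
  rcases (Nat.dvd_prime Nat.prime_two).mp hdvd with h1 | h1
  · exact orderOf_eq_one_iff.mp h1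
  · rw [h1] at hoddg; exact absurd dvd_rfl hoddg

end OddAux

section Lam

variable {G : Type*} [Group G]

/-- A choice of exponent: if `x ∈ zpowers g` then `g ^ expo g x = x`. -/
noncomputable def expo (g x : G) : ℤ :=
  if h : x ∈ Subgroup.zpowers g then Classical.choose (Subgroup.mem_zpowers_iff.mp h) else 0

lemma expo_spec {g x : G} (h : x ∈ Subgroup.zpowers g) : g ^ expo g x = x := by
  rw [expo, dif_pos h]
  exact Classical.choose_spec (Subgroup.mem_zpowers_iff.mp h)

/-- The character of the cyclic group `zpowers g`, extended by `0`. -/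
noncomputable def lam (g : G) (z : ℂ) (x : G) : ℂ :=
  if x ∈ Subgroup.zpowers g then z ^ expo g x else 0

variable {g : G} {z : ℂ} (hz : ∀ a : ℤ, g ^ a = 1 → z ^ a = 1) (hz0 : z ≠ 0)
include hz hz0

lemma lam_zpow (a : ℤ) : lam g z (g ^ a) = z ^ a := by
  have hm : g ^ a ∈ Subgroup.zpowers g := Subgroup.mem_zpowers_iff.mpr ⟨a, rfl⟩
  rw [lam, if_pos hm]
  have h1 : g ^ (expo g (g ^ a) - a) = 1 := by
    rw [zpow_sub, expo_spec hm, mul_inv_cancel]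
  have h2 := hz _ h1
  rw [zpow_sub₀ hz0, div_eq_one_iff_eq (zpow_ne_zero _ hz0)] at h2
  rw [h2]

lemma lam_mem_mul {x y : G} (hx : x ∈ Subgroup.zpowers g) (hy : y ∈ Subgroup.zpowers g) :
    lam g z (x * y) = lam g z x * lam g z y := by
  obtain ⟨a, rfl⟩ := Subgroup.mem_zpowers_iff.mp hx
  obtain ⟨b, rfl⟩ := Subgroup.mem_zpowers_iff.mp hy
  rw [← zpow_add, lam_zpow hz hz0, lam_zpow hz hz0, lam_zpow hz hz0, zpow_add₀ hz0]

lemma lam_one' : lam g z 1 = 1 := by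
  have h := lam_zpow hz hz0 0
  rw [zpow_zero, zpow_zero] at h
  exact h

end Lam

section Cocycle

variable {G : Type*} [Group G]

/-- cocycle of the induced representation -/
noncomputable def coc (g s : G) (q : G ⧸ Subgroup.zpowers g) : G :=
  (Quotient.out q)⁻¹ * s * (Quotient.out ((s⁻¹ • q) : G ⧸ Subgroup.zpowers g))

lemma coc_mem (g s : G) (q : G ⧸ Subgroup.zpowers g) : coc g s q ∈ Subgroup.zpowers g := by
  have h1 : (QuotientGroup.mk (s⁻¹ * Quotient.out q) : G ⧸ Subgroup.zpowers g)
      = QuotientGroup.mk (Quotient.out ((s⁻¹ • q) : G ⧸ Subgroup.zpowers g)) := by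
    rw [QuotientGroup.out_eq']
    rw [show (QuotientGroup.mk (s⁻¹ * Quotient.out q) : G ⧸ Subgroup.zpowers g)
        = s⁻¹ • (QuotientGroup.mk (Quotient.out q)) from rfl, QuotientGroup.out_eq']
  have h2 := QuotientGroup.eq.mp h1
  rw [mul_inv_rev, inv_inv, mul_assoc] at h2
  unfold coc
  rw [mul_assoc]
  exact h2

lemma coc_cocycle (g s t : G) (q : G ⧸ Subgroup.zpowers g) :
    coc g s q * coc g t (s⁻¹ • q) = coc g (s * t) q := by
  unfold coc
  rw [smul_smul, ← mul_inv_rev]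
  group

lemma coc_one (g : G) (q : G ⧸ Subgroup.zpowers g) : coc g 1 q = 1 := by
  unfold coc
  rw [inv_one, one_smul, mul_one, inv_mul_cancel]

end Cocycle

section Rep

variable {G : Type*} [Group G] {g : G} {z : ℂ}

/-- The induced representation from the character `lam g z` of `zpowers g`,
realized on functions on the coset space. -/
noncomputable def indRep (hz : ∀ a : ℤ, g ^ a = 1 → z ^ a = 1) (hz0 : z ≠ 0) :
    Representation ℂ G ((G ⧸ Subgroup.zpowers g) → ℂ) where
  toFun s :=
    { toFun := fun f q => lam g z (coc g s q) * f (s⁻¹ • q)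
      map_add' := by intro f₁ f₂; funext q; simp [mul_add]
      map_smul' := by intro a f; funext q; simp [smul_eq_mul]; ring }
  map_one' := by
    ext f q
    simp [coc_one, lam_one' hz hz0]
  map_mul' := by
    intro s t
    ext f q
    simp only [LinearMap.coe_mk, AddHom.coe_mk, Module.End.mul_apply]
    rw [← coc_cocycle g s t q, lam_mem_mul hz hz0 (coc_mem g s q) (coc_mem g t (s⁻¹ • q)),
      mul_inv_rev, mul_smul]
    ring

end Rep

section TraceAux

lemma trace_monomial {ι : Type*} [Fintype ι] [DecidableEq ι] (c : ι → ℂ) (σ : ι → ι)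
    (T : (ι → ℂ) →ₗ[ℂ] (ι → ℂ)) (hT : ∀ f q, T f q = c q * f (σ q)) :
    LinearMap.trace ℂ (ι → ℂ) T = ∑ q ∈ Finset.univ.filter (fun q => σ q = q), c q := by
  rw [LinearMap.trace_eq_matrix_trace ℂ (Pi.basisFun ℂ ι), Matrix.trace]
  rw [Finset.sum_filter]
  apply Finset.sum_congr rfl
  intro i _
  rw [Matrix.diag_apply, LinearMap.toMatrix_apply, Pi.basisFun_repr, hT, Pi.basisFun_apply]
  by_cases h : σ i = i
  · rw [if_pos h, h, Pi.single_eq_same, mul_one]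
  · rw [if_neg h, Pi.single_eq_of_ne h, mul_zero]
end TraceAux

section CharFormula

variable {G : Type*} [Group G] {g : G} {z : ℂ}

lemma fixed_mem {q : G ⧸ Subgroup.zpowers g} (hq : g⁻¹ • q = q) :
    (Quotient.out q)⁻¹ * g * Quotient.out q ∈ Subgroup.zpowers g := by
  have h1 : (QuotientGroup.mk (g⁻¹ * Quotient.out q) : G ⧸ Subgroup.zpowers g)
      = QuotientGroup.mk (Quotient.out q) := by
    rw [show (QuotientGroup.mk (g⁻¹ * Quotient.out q) : G ⧸ Subgroup.zpowers g)
        = g⁻¹ • (QuotientGroup.mk (Quotient.out q)) from rfl, QuotientGroup.out_eq', hq]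
  have h2 := QuotientGroup.eq.mp h1
  rw [mul_inv_rev, inv_inv, mul_assoc] at h2
  rw [mul_assoc]
  exact h2

lemma char_indRep [Fintype (G ⧸ Subgroup.zpowers g)] [DecidableEq (G ⧸ Subgroup.zpowers g)]
    (hz : ∀ a : ℤ, g ^ a = 1 → z ^ a = 1) (hz0 : z ≠ 0) :
    LinearMap.trace ℂ _ (indRep hz hz0 g) =
      ∑ q ∈ Finset.univ.filter (fun q : G ⧸ Subgroup.zpowers g => g⁻¹ • q = q),
        z ^ expo g ((Quotient.out q)⁻¹ * g * Quotient.out q) := by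
  have h := trace_monomial (ι := G ⧸ Subgroup.zpowers g) (fun q => lam g z (coc g g q)) (fun q => g⁻¹ • q)
      ((indRep hz hz0) g) (fun f q => rfl)
  rw [h]
  apply Finset.sum_congr rfl
  intro q hq
  have hfix : g⁻¹ • q = q := (Finset.mem_filter.mp hq).2
  have hcoc : coc g g q = (Quotient.out q)⁻¹ * g * Quotient.out q := by
    unfold coc; rw [hfix]
  rw [hcoc, lam, if_pos (fixed_mem hfix)]

end CharFormula

section Transport

variable {G : Type*} [Group G]

/-- Transport of a representation along a linear equivalence. -/
noncomputable def repConj {V W : Type*} [AddCommGroup V] [Module ℂ V]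
    [AddCommGroup W] [Module ℂ W] (e : V ≃ₗ[ℂ] W) (ρ : Representation ℂ G V) :
    Representation ℂ G W where
  toFun s := e.conj (ρ s)
  map_one' := by
    show e.conj (ρ 1) = 1
    rw [map_one, Module.End.one_eq_id, LinearEquiv.conj_id, Module.End.one_eq_id]
  map_mul' s t := by
    show e.conj (ρ (s * t)) = e.conj (ρ s) * e.conj (ρ t)
    rw [map_mul]
    show e.conj ((ρ s) ∘ₗ (ρ t)) = (e.conj (ρ s)) ∘ₗ (e.conj (ρ t))
    exact (LinearEquiv.conj_comp e (ρ t) (ρ s))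

lemma repConj_trace {V W : Type*} [AddCommGroup V] [Module ℂ V]
    [AddCommGroup W] [Module ℂ W] (e : V ≃ₗ[ℂ] W) (ρ : Representation ℂ G V) (s : G) :
    LinearMap.trace ℂ W (repConj e ρ s) = LinearMap.trace ℂ V (ρ s) :=
  LinearMap.trace_conj' (ρ s) e

end Transport

section Involution

lemma conj_trace_of_sq_one {V : Type*} [AddCommGroup V] [Module ℂ V] [FiniteDimensional ℂ V]
    (A : V →ₗ[ℂ] V) (hA : A * A = 1) :
    (starRingEnd ℂ) (LinearMap.trace ℂ V A) = LinearMap.trace ℂ V A := by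
  set P : V →ₗ[ℂ] V := (2⁻¹ : ℂ) • (1 + A) with hP
  set Q : V →ₗ[ℂ] V := (2⁻¹ : ℂ) • (1 - A) with hQ
  have h1 : (1 + A) * (1 + A) = (2 : ℂ) • (1 + A) := by
    rw [mul_add, add_mul, add_mul, hA, two_smul]
    simp only [one_mul, mul_one]
    abel
  have h2 : (1 - A) * (1 - A) = (2 : ℂ) • (1 - A) := by
    rw [mul_sub, sub_mul, sub_mul, hA, two_smul]
    simp only [one_mul, mul_one]
    abel
  have hPP : P * P = P := by
    rw [hP, smul_mul_assoc, mul_smul_comm, h1, smul_smul, smul_smul]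
    norm_num
  have hQQ : Q * Q = Q := by
    rw [hQ, smul_mul_assoc, mul_smul_comm, h2, smul_smul, smul_smul]
    norm_num
  have hPproj : LinearMap.IsProj (LinearMap.range P) P := by
    refine ⟨fun x => LinearMap.mem_range_self P x, ?_⟩
    rintro x ⟨y, rfl⟩
    exact congrFun (congrArg DFunLike.coe hPP) y
  have hQproj : LinearMap.IsProj (LinearMap.range Q) Q := by
    refine ⟨fun x => LinearMap.mem_range_self Q x, ?_⟩
    rintro x ⟨y, rfl⟩
    exact congrFun (congrArg DFunLike.coe hQQ) y
  have hsub : A = P - Q := by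
    rw [hP, hQ, ← smul_sub]
    have h3 : (1 + A) - (1 - A) = (2 : ℂ) • A := by rw [two_smul]; abel
    rw [h3, smul_smul]
    norm_num
  rw [hsub, map_sub, hPproj.trace, hQproj.trace, map_sub, map_natCast, map_natCast]

end Involution

/-- A finite group `G` has even order iff there is a nontrivial element `g` all of whose
character values (on every finite-dimensional complex representation) are real. -/
theorem card_even_iff_exists_real_character_element
    {G : Type*} [Group G] [Fintype G] :
    Even (Fintype.card G) ↔
      ∃ g : G, g ≠ 1 ∧
        ∀ (V : Type) (_ : AddCommGroup V) (_ : Module ℂ V) (_ : FiniteDimensional ℂ V)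
          (ρ : Representation ℂ G V),
          (starRingEnd ℂ) (LinearMap.trace ℂ V (ρ g)) = LinearMap.trace ℂ V (ρ g) := by
  constructor
  · intro heven
    haveI : Fact (Nat.Prime 2) := ⟨Nat.prime_two⟩
    obtain ⟨g, hg⟩ := exists_prime_orderOf_dvd_card 2 (even_iff_two_dvd.mp heven)
    refine ⟨g, ?_, ?_⟩
    · intro h
      rw [h, orderOf_one] at hg
      norm_num at hg
    · intro V iV1 iV2 iV3 ρ
      apply conj_trace_of_sq_one
      have hgg : g * g = 1 := by
        rw [← pow_two, ← hg]
        exact pow_orderOf_eq_one g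
      rw [← map_mul, hgg, map_one]
  · rintro ⟨g, hg1, hreal⟩
    by_contra hodd
    haveI := Classical.decEq (G ⧸ Subgroup.zpowers g)
    haveI : Fintype (G ⧸ Subgroup.zpowers g) := Fintype.ofFinite _
    set n := orderOf g with hn
    have hn0 : n ≠ 0 := (orderOf_pos g).ne'
    set ζ : ℂ := Complex.exp (2 * Real.pi * Complex.I / n) with hζdef
    have hζ : IsPrimitiveRoot ζ n := Complex.isPrimitiveRoot_exp n hn0
    have hζ0 : ζ ≠ 0 := Complex.exp_ne_zero _
    -- the character values
    have hz : ∀ m : ℕ, ∀ a : ℤ, g ^ a = 1 → (ζ ^ m) ^ a = 1 := by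
      intro m a ha
      obtain ⟨b, hb⟩ := orderOf_dvd_iff_zpow_eq_one.mpr ha
      have hn1 : (ζ ^ m) ^ (n : ℕ) = 1 := by
        rw [← pow_mul, mul_comm, pow_mul, hζ.pow_eq_one, one_pow]
      rw [hb, zpow_mul, zpow_natCast, hn1, one_zpow]
    have hz0 : ∀ m : ℕ, ζ ^ m ≠ 0 := fun m => pow_ne_zero _ hζ0
    set F : Finset (G ⧸ Subgroup.zpowers g) :=
      Finset.univ.filter (fun q => g⁻¹ • q = q) with hF
    set eq : (G ⧸ Subgroup.zpowers g) → ℤ :=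
      fun q => expo g ((Quotient.out q)⁻¹ * g * Quotient.out q) with heq
    -- conjugation formula
    have hconj : ∀ t : ℤ, (starRingEnd ℂ) (ζ ^ t) = ζ ^ (-t) := by
      intro t
      have hcz : (starRingEnd ℂ) ζ = ζ⁻¹ := by
        rw [hζdef, ← Complex.exp_conj]
        rw [← Complex.exp_neg]
        congr 1
        simp [map_div₀, Complex.conj_I, map_ofNat]
        ring
      rw [map_zpow₀, hcz, inv_zpow, ← zpow_neg]
    -- the reality hypothesis for each induced representation
    have hχ : ∀ m : ℕ,
        (∑ q ∈ F, ζ ^ (-((m : ℤ) * eq q))) = ∑ q ∈ F, ζ ^ ((m : ℤ) * eq q) := by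
      intro m
      have N := Fintype.card (G ⧸ Subgroup.zpowers g)
      have hr := hreal (Fin (Fintype.card (G ⧸ Subgroup.zpowers g)) → ℂ)
        inferInstance inferInstance inferInstance
        (repConj (LinearEquiv.funCongrLeft ℂ ℂ (Fintype.equivFin (G ⧸ Subgroup.zpowers g)).symm)
          (indRep (hz m) (hz0 m)))
      rw [repConj_trace, char_indRep] at hr
      simp_rw [← zpow_natCast ζ m, ← zpow_mul, map_sum, hconj] at hr
      exact hr
    -- geometric sums
    have hgeo : ∀ t : ℤ, ∑ m ∈ Finset.range n, ζ ^ ((m : ℤ) * t)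
        = if (n : ℤ) ∣ t then (n : ℂ) else 0 := by
      intro t
      have hXm : ∀ m : ℕ, ζ ^ ((m : ℤ) * t) = (ζ ^ t) ^ m := by
        intro m
        rw [mul_comm, zpow_mul, zpow_natCast]
      by_cases hdvd : (n : ℤ) ∣ t
      · have h1 : ζ ^ t = 1 := (hζ.zpow_eq_one_iff_dvd t).mpr hdvd
        simp [hXm, h1, hdvd]
      · have hne : ζ ^ t ≠ 1 := fun h => hdvd ((hζ.zpow_eq_one_iff_dvd t).mp h)
        rw [if_neg hdvd]
        have hpow : (ζ ^ t) ^ (n : ℕ) = 1 := by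
          rw [← zpow_natCast, ← zpow_mul, mul_comm, zpow_mul, zpow_natCast, hζ.pow_eq_one,
            one_zpow]
        simp_rw [hXm]
        rw [geom_sum_eq hne, hpow, sub_self, zero_div]
    -- the double-sum identity
    have hdouble :
        ∑ q ∈ F, (if (n : ℤ) ∣ (eq q + 1) then (n : ℂ) else 0)
          = ∑ q ∈ F, (if (n : ℤ) ∣ (1 - eq q) then (n : ℂ) else 0) := by
      calc ∑ q ∈ F, (if (n : ℤ) ∣ (eq q + 1) then (n : ℂ) else 0)
          = ∑ q ∈ F, ∑ m ∈ Finset.range n, ζ ^ ((m : ℤ) * (eq q + 1)) := by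
            exact Finset.sum_congr rfl fun q _ => (hgeo _).symm
        _ = ∑ m ∈ Finset.range n, ∑ q ∈ F, ζ ^ ((m : ℤ) * eq q) * ζ ^ (m : ℤ) := by
            rw [Finset.sum_comm]
            refine Finset.sum_congr rfl fun m _ => Finset.sum_congr rfl fun q _ => ?_
            rw [← zpow_add₀ hζ0, mul_add, mul_one]
        _ = ∑ m ∈ Finset.range n, ∑ q ∈ F, ζ ^ (-((m : ℤ) * eq q)) * ζ ^ (m : ℤ) := by
            refine Finset.sum_congr rfl fun m _ => ?_
            rw [← Finset.sum_mul, ← Finset.sum_mul, hχ m]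
        _ = ∑ q ∈ F, ∑ m ∈ Finset.range n, ζ ^ ((m : ℤ) * (1 - eq q)) := by
            rw [Finset.sum_comm]
            refine Finset.sum_congr rfl fun q _ => Finset.sum_congr rfl fun m _ => ?_
            rw [← zpow_add₀ hζ0, mul_sub, mul_one]
            ring_nf
        _ = ∑ q ∈ F, (if (n : ℤ) ∣ (1 - eq q) then (n : ℂ) else 0) := by
            exact Finset.sum_congr rfl fun q _ => hgeo _
    -- convert to cardinalities
    set A := F.filter (fun q => (n : ℤ) ∣ (eq q + 1)) with hA
    set B := F.filter (fun q => (n : ℤ) ∣ (1 - eq q)) with hB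
    have hcard : A.card = B.card := by
      have h1 : ∑ q ∈ F, (if (n : ℤ) ∣ (eq q + 1) then (n : ℂ) else 0) = A.card * n := by
        rw [← Finset.sum_filter, ← hA, Finset.sum_const, nsmul_eq_mul]
      have h2 : ∑ q ∈ F, (if (n : ℤ) ∣ (1 - eq q) then (n : ℂ) else 0) = B.card * n := by
        rw [← Finset.sum_filter, ← hB, Finset.sum_const, nsmul_eq_mul]
      rw [h1, h2] at hdouble
      have hnC : (n : ℂ) ≠ 0 := Nat.cast_ne_zero.mpr hn0
      exact_mod_cast mul_right_cancel₀ hnC hdouble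
    -- B is nonempty
    have hBne : B.Nonempty := by
      set q0 : G ⧸ Subgroup.zpowers g := QuotientGroup.mk (1 : G) with hq0
      refine ⟨q0, ?_⟩
      have hq0F : g⁻¹ • q0 = q0 := by
        rw [hq0, MulAction.Quotient.smul_mk]
        refine QuotientGroup.eq.mpr ?_
        simp [Subgroup.mem_zpowers]
      have hout : Quotient.out q0 ∈ Subgroup.zpowers g := by
        have h2 : (QuotientGroup.mk (Quotient.out q0) : G ⧸ Subgroup.zpowers g)
            = QuotientGroup.mk (1 : G) := by rw [QuotientGroup.out_eq', hq0]
        have h3 := QuotientGroup.eq.mp h2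
        simpa using (Subgroup.zpowers g).inv_mem h3
      have hw : (Quotient.out q0)⁻¹ * g * Quotient.out q0 = g := by
        obtain ⟨a, ha⟩ := Subgroup.mem_zpowers_iff.mp hout
        rw [← ha]
        have hcomm : g * g ^ a = g ^ a * g := ((Commute.refl g).zpow_right a).eq
        rw [mul_assoc, hcomm, inv_mul_cancel_left]
      refine Finset.mem_filter.mpr ⟨Finset.mem_filter.mpr ⟨Finset.mem_univ _, hq0F⟩, ?_⟩
      have hge : g ^ (eq q0) = g := by
        rw [heq]
        simp only []
        rw [hw]
        exact expo_spec (Subgroup.mem_zpowers g)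
      have : g ^ (eq q0 - 1) = 1 := by
        rw [zpow_sub, hge, zpow_one, mul_inv_cancel]
      have hdvd := orderOf_dvd_iff_zpow_eq_one.mpr this
      rw [← hn] at hdvd
      have := (dvd_neg).mpr hdvd
      rwa [neg_sub] at this
    -- hence A is nonempty; extract the conjugating element
    have hAne : A.Nonempty := by
      rw [← Finset.card_pos, hcard, Finset.card_pos]
      exact hBne
    obtain ⟨q, hq⟩ := hAne
    obtain ⟨hqF, hqdvd⟩ := Finset.mem_filter.mp hq
    have hfix : g⁻¹ • q = q := (Finset.mem_filter.mp hqF).2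
    have hwmem := fixed_mem hfix
    have hgw : g ^ (eq q) = (Quotient.out q)⁻¹ * g * Quotient.out q := expo_spec hwmem
    have h1 : g ^ (eq q + 1) = 1 := orderOf_dvd_iff_zpow_eq_one.mp (hn ▸ hqdvd)
    have h2 : g ^ (eq q) = g⁻¹ := by
      rw [zpow_add_one] at h1
      exact eq_inv_of_mul_eq_one_left h1
    have hconjinv : (Quotient.out q)⁻¹ * g * ((Quotient.out q)⁻¹)⁻¹ = g⁻¹ := by
      rw [inv_inv, ← hgw, h2]
    exact hg1 (aux_eq_one_of_conj_inv hodd hconjinv)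
end
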